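/- Let 0 < q ≤ 2, let ε > 0, and let x, y be arbitrary real numbers. Then |x|^q ≤ (q/2)·(y² + ε)^((q−2)/2)·x² + ((2−q)/2)·(y² + ε)^(q/2). -/

import Mathlib

/-! Put `a = x²`, `b = y² + ε` and `t = q / 2`. Weighted AM–GM gives
`a ^ t * b ^ (1 - t) ≤ t * a + (1 - t) * b`; dividing by `b ^ (1 - t)` yields the tangent-line bound
of the concave map `a ↦ a ^ t` at `b`, which is the claim since `|x| ^ q = a ^ t`. -/

namespace Real

theorem rpow_le_tangent_of_le_one {a b t : ℝ} (ha : 0 ≤ a) (hb : 0 < b) (ht0 : 0 ≤ t)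
    (ht1 : t ≤ 1) : a ^ t ≤ t * b ^ (t - 1) * a + (1 - t) * b ^ t := by
  have amgm : a ^ t * b ^ (1 - t) ≤ t * a + (1 - t) * b :=
    geom_mean_le_arith_mean2_weighted ht0 (by linarith) ha hb.le (by ring)
  have hcancel : b ^ (1 - t) * b ^ (t - 1) = 1 := by
    rw [← rpow_add hb]; norm_num
  have hb_mul : b * b ^ (t - 1) = b ^ t := by
    rw [mul_comm, ← rpow_add_one hb.ne']; norm_num
  calc a ^ t = a ^ t * b ^ (1 - t) * b ^ (t - 1) := by rw [mul_assoc, hcancel, mul_one]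
    _ ≤ (t * a + (1 - t) * b) * b ^ (t - 1) :=
      mul_le_mul_of_nonneg_right amgm (rpow_nonneg hb.le _)
    _ = t * b ^ (t - 1) * a + (1 - t) * b ^ t := by rw [← hb_mul]; ring

end Real

/-- ε-perturbed version of Lemma 1. -/
theorem lq_majorization_eps (q ε x y : ℝ) (hq0 : 0 < q) (hq2 : q ≤ 2) (hε : 0 < ε) :
    |x| ^ q ≤ q / 2 * (y ^ 2 + ε) ^ ((q - 2) / 2) * x ^ 2
      + (2 - q) / 2 * (y ^ 2 + ε) ^ (q / 2) := by
  have hx : |x| ^ q = (x ^ 2) ^ (q / 2) := by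
    rw [← sq_abs x, ← Real.rpow_natCast, ← Real.rpow_mul (abs_nonneg x)]
    push_cast
    ring_nf
  have key := Real.rpow_le_tangent_of_le_one (sq_nonneg x) (by positivity : 0 < y ^ 2 + ε)
    (by positivity : 0 ≤ q / 2) (by linarith : q / 2 ≤ 1)
  rw [hx]
  convert key using 3 <;> ring_nf
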